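/- Let N ≥ 1, let φ : ℝ^N → ℝ be a continuously differentiable function with compact support which is not identically zero, and let f : ℝ → ℝ be continuous satisfying (f1) and (f2). Then there exist p₁ ∈ (1, min(p₀, θ)) and M > 0 such that for every p ∈ (1, p₁] there is t > 0 with t^{p−1} ∫_{ℝ^N} ‖∇φ(x)‖^p dx = ∫_{ℝ^N} f(t·φ(x))·φ(x) dx and (t^p/p) ∫_{ℝ^N} ‖∇φ(x)‖^p dx − ∫_{ℝ^N} F(t·φ(x)) dx ≤ M. In particular, the p-energy of the Nehari rescaling of φ is bounded above uniformly for p close to 1. -/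

import Mathlib

/-!
Write `A_p = ∫ ‖∇φ‖ ^ p > 0`, `Φ t = ∫ f (t φ) φ` and `Ψ t = ∫ F (t φ)`. By (f1), `Φ t` is
`O(t ^ (p₀ - 1))` as `t → 0⁺`, hence below `t ^ (p - 1) A_p` since `p < p₀`. By (f2),
`F s / |s| ^ θ` is nondecreasing for `|s| ≥ 1`, so `t Φ t ≥ θ Ψ t ≳ t ^ θ` for large `t`, which is
above `t ^ p A_p` since `p < θ`; the intermediate value theorem gives the Nehari scale `t`.
At that scale `t ^ θ ≲ t ^ p A_p`, and `A_p ≤ ∫ (‖∇φ‖ + ‖∇φ‖ ^ p₁)` for `p ≤ p₁`, so `t` is bounded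
uniformly in `p ∈ (1, p₁]` because `θ - p ≥ θ - p₁ > 0`; the energy is at most `t ^ p A_p`.
-/

open MeasureTheory Filter Real Set Topology

theorem exists_abs_mul_le_rpow_of_tendsto {f : ℝ → ℝ} {p : ℝ} (hp : 1 < p)
    (hf : Tendsto (fun t => f t / |t| ^ (p - 1)) (𝓝[≠] 0) (𝓝 0)) :
    ∃ δ > 0, ∀ s : ℝ, |s| < δ → |f s * s| ≤ |s| ^ p := by
  obtain ⟨δ, hδ, h⟩ := Metric.tendsto_nhdsWithin_nhds.1 hf 1 one_pos
  refine ⟨δ, hδ, fun s hs => ?_⟩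
  rcases eq_or_ne s 0 with rfl | hs0
  · simp [zero_rpow (by linarith : p ≠ 0)]
  have hpow : 0 < |s| ^ (p - 1) := by positivity
  have hlt : |f s| < |s| ^ (p - 1) := by
    simpa [Real.dist_eq, abs_div, abs_of_pos hpow, div_lt_one hpow] using h hs0 (by simpa using hs)
  calc |f s * s| = |f s| * |s| := abs_mul _ _
    _ ≤ |s| ^ (p - 1) * |s| := by gcongr
    _ = |s| ^ p := by rw [← rpow_add_one (abs_ne_zero.2 hs0), sub_add_cancel]

theorem mul_rpow_le_of_mul_le_mul_deriv {G g : ℝ → ℝ} {θ : ℝ}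
    (hG : ∀ u, 0 < u → HasDerivAt G (g u) u) (hθG : ∀ u, 0 < u → θ * G u ≤ g u * u)
    {s : ℝ} (hs : 1 ≤ s) : G 1 * s ^ θ ≤ G s := by
  have hderiv : ∀ u, 0 < u → HasDerivAt (fun u => G u / u ^ θ)
      ((g u * u ^ θ - G u * (θ * u ^ (θ - 1))) / (u ^ θ) ^ 2) u := fun u hu =>
    (hG u hu).div (hasDerivAt_rpow_const (Or.inl hu.ne')) (rpow_pos_of_pos hu θ).ne'
  have hmono : MonotoneOn (fun u => G u / u ^ θ) (Ici 1) := by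
    refine monotoneOn_of_hasDerivWithinAt_nonneg (convex_Ici 1)
      (fun u hu => (hderiv u (zero_lt_one.trans_le hu)).continuousAt.continuousWithinAt)
      (fun u hu => (hderiv u (zero_lt_one.trans (by simpa using hu))).hasDerivWithinAt)
      fun u hu => ?_
    have hu0 : 0 < u := zero_lt_one.trans (by simpa using hu)
    -- `u ^ θ = u ^ (θ - 1) * u` turns the numerator into `u ^ (θ - 1) * (g u * u - θ * G u)`
    have hsplit : u ^ θ = u ^ (θ - 1) * u := by rw [← rpow_add_one hu0.ne', sub_add_cancel]
    have := hθG u hu0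
    have : 0 ≤ u ^ (θ - 1) := by positivity
    rw [hsplit]
    exact div_nonneg (by nlinarith) (sq_nonneg _)
  have h1s := hmono (mem_Ici.2 le_rfl) (mem_Ici.2 hs) hs
  simp only [one_rpow, div_one] at h1s
  rwa [le_div_iff₀ (by positivity)] at h1s

theorem min_mul_abs_rpow_le {F f : ℝ → ℝ} {θ : ℝ} (hF : ∀ t, HasDerivAt F (f t) t)
    (hθF : ∀ t, θ * F t ≤ f t * t) {s : ℝ} (hs : 1 ≤ |s|) :
    min (F 1) (F (-1)) * |s| ^ θ ≤ F s := by
  rcases le_or_gt 0 s with h0 | h0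
  · rw [abs_of_nonneg h0] at hs ⊢
    calc min (F 1) (F (-1)) * s ^ θ ≤ F 1 * s ^ θ := by gcongr; exact min_le_left _ _
      _ ≤ F s := mul_rpow_le_of_mul_le_mul_deriv (fun u _ => hF u) (fun u _ => hθF u) hs
  · rw [abs_of_neg h0] at hs ⊢
    have hneg := mul_rpow_le_of_mul_le_mul_deriv (G := fun u => F (-u)) (g := fun u => -f (-u))
      (fun u _ => by simpa [Function.comp_def] using (hF (-u)).comp u (hasDerivAt_neg u))
      (fun u _ => by simpa using hθF (-u)) hs
    simp only [neg_neg] at hneg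
    calc min (F 1) (F (-1)) * (-s) ^ θ ≤ F (-1) * (-s) ^ θ := by gcongr; exact min_le_right _ _
      _ ≤ F s := hneg

theorem rpow_le_self_add_rpow {a p q : ℝ} (ha : 0 ≤ a) (hp : 1 ≤ p) (hpq : p ≤ q) :
    a ^ p ≤ a + a ^ q := by
  rcases le_total a 1 with ha1 | ha1
  · calc a ^ p ≤ a ^ (1 : ℝ) := rpow_le_rpow_of_exponent_ge' ha ha1 zero_le_one hp
      _ ≤ a + a ^ q := by rw [rpow_one]; linarith [rpow_nonneg ha q]
  · linarith [rpow_le_rpow_of_exponent_le ha1 hpq]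

section Rescaling

variable {E : Type*} [TopologicalSpace E] [MeasurableSpace E] [OpensMeasurableSpace E]
  {μ : Measure E} [IsFiniteMeasureOnCompacts μ] {φ g : E → ℝ}

theorem integrable_rpow_of_hasCompactSupport (hg : Continuous g) (hgc : HasCompactSupport g) {p : ℝ} (hp : 0 < p) : Integrable (fun x => g x ^ p) μ :=
  (hg.rpow_const fun _ => Or.inr hp.le).integrable_of_hasCompactSupport (hgc.rpow_const hp.ne')

theorem integrable_comp_mul {G : ℝ → ℝ} (hG : Continuous G) (hG0 : G 0 = 0)
    (hφ : Continuous φ) (hφc : HasCompactSupport φ) (t : ℝ) :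
    Integrable (fun x => G (t * φ x)) μ :=
  (hG.comp (continuous_const.mul hφ)).integrable_of_hasCompactSupport (hφc.mul_left.comp_left hG0)

theorem integrable_comp_mul_mul {f : ℝ → ℝ} (hf : Continuous f) (hφ : Continuous φ)
    (hφc : HasCompactSupport φ) (t : ℝ) : Integrable (fun x => f (t * φ x) * φ x) μ :=
  ((hf.comp (continuous_const.mul hφ)).mul hφ).integrable_of_hasCompactSupport hφc.mul_left

theorem continuous_integral_comp_mul_mul [WeaklyLocallyCompactSpace E] {f : ℝ → ℝ}
    (hf : Continuous f) (hφ : Continuous φ) (hφc : HasCompactSupport φ) :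
    Continuous fun t => ∫ x, f (t * φ x) * φ x ∂μ := by
  have hvanish : ∀ t x, x ∉ tsupport φ → f (t * φ x) * φ x = 0 := fun t x hx => by
    rw [image_eq_zero_of_notMem_tsupport hx, mul_zero]
  rw [show (fun t => ∫ x, f (t * φ x) * φ x ∂μ) = fun t => ∫ x in tsupport φ, f (t * φ x) * φ x ∂μ
    from funext fun t => (setIntegral_eq_integral_of_forall_compl_eq_zero (hvanish t)).symm]
  exact continuous_parametric_integral_of_continuous (by fun_prop) hφc

theorem mul_integral_comp_mul_le {F f : ℝ → ℝ} {θ : ℝ} (hF : Continuous F) (hF0 : F 0 = 0)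
    (hf : Continuous f) (hθF : ∀ s, θ * F s ≤ f s * s) (hφ : Continuous φ)
    (hφc : HasCompactSupport φ) (t : ℝ) :
    θ * ∫ x, F (t * φ x) ∂μ ≤ t * ∫ x, f (t * φ x) * φ x ∂μ := by
  rw [← integral_const_mul, ← integral_const_mul]
  refine integral_mono ((integrable_comp_mul hF hF0 hφ hφc t).const_mul θ)
    ((integrable_comp_mul_mul hf hφ hφc t).const_mul t) fun x => ?_
  calc θ * F (t * φ x) ≤ f (t * φ x) * (t * φ x) := hθF _
    _ = t * (f (t * φ x) * φ x) := by ring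

theorem exists_integral_comp_mul_mul_le_rpow {f : ℝ → ℝ} {p : ℝ} (hp : 1 < p) (hf : Continuous f)
    (hfp : ∃ δ > 0, ∀ s : ℝ, |s| < δ → |f s * s| ≤ |s| ^ p) (hφ : Continuous φ)
    (hφc : HasCompactSupport φ) :
    ∃ δ > 0, ∀ t ∈ Ioo 0 δ, ∫ x, f (t * φ x) * φ x ∂μ ≤ t ^ (p - 1) * ∫ x, |φ x| ^ p ∂μ := by
  obtain ⟨δ, hδ, hfδ⟩ := hfp
  obtain ⟨C, hC⟩ := hφ.bounded_above_of_compact_support hφc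
  have hK : ∀ x, |φ x| ≤ max C 0 + 1 := fun x => by
    linarith [hC x, le_max_left C 0, Real.norm_eq_abs (φ x)]
  refine ⟨δ / (max C 0 + 1), by positivity, fun t ⟨ht0, htδ⟩ => ?_⟩
  rw [← integral_const_mul]
  refine integral_mono (integrable_comp_mul_mul hf hφ hφc t)
    ((integrable_rpow_of_hasCompactSupport hφ.abs hφc.abs (by linarith)).const_mul _) fun x => ?_
  have hsmall : |t * φ x| < δ := by
    rw [abs_mul, abs_of_pos ht0]
    calc t * |φ x| ≤ t * (max C 0 + 1) := by gcongr; exact hK x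
      _ < δ := (lt_div_iff₀ (by positivity)).1 htδ
  have key : t * (f (t * φ x) * φ x) ≤ t * (t ^ (p - 1) * |φ x| ^ p) :=
    calc t * (f (t * φ x) * φ x) = f (t * φ x) * (t * φ x) := by ring
      _ ≤ |t * φ x| ^ p := (le_abs_self _).trans (hfδ _ hsmall)
      _ = t * (t ^ (p - 1) * |φ x| ^ p) := by
        rw [abs_mul, abs_of_pos ht0, mul_rpow ht0.le (abs_nonneg _), ← mul_assoc,
          ← rpow_one_add' ht0.le (by linarith), add_sub_cancel]
  exact le_of_mul_le_mul_left key ht0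

theorem exists_mul_rpow_le_integral_comp_mul [μ.IsOpenPosMeasure] {F : ℝ → ℝ} {θ c₀ : ℝ}
    (hθ : 0 ≤ θ) (hc₀ : 0 < c₀) (hF : Continuous F) (hF0 : F 0 = 0) (hFnonneg : ∀ s, 0 ≤ F s)
    (hFgrowth : ∀ s, 1 ≤ |s| → c₀ * |s| ^ θ ≤ F s) (hφ : Continuous φ)
    (hφc : HasCompactSupport φ) (hφ0 : φ ≠ 0) :
    ∃ c > 0, ∃ t₀, ∀ t, t₀ ≤ t → c * t ^ θ ≤ ∫ x, F (t * φ x) ∂μ := by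
  obtain ⟨y, hy⟩ : ∃ y, φ y ≠ 0 := Function.ne_iff.1 hφ0
  set δ := |φ y| / 2
  have hδ : 0 < δ := by positivity
  set S := {x | δ < |φ x|}
  have hSopen : IsOpen S := isOpen_lt continuous_const hφ.abs
  have hSfin : μ S < ⊤ :=
    (measure_mono fun x hx => subset_tsupport φ (abs_pos.1 (hδ.trans hx))).trans_lt
      hφc.measure_lt_top
  have hSpos : 0 < μ.real S := ENNReal.toReal_pos
    (hSopen.measure_pos μ ⟨y, by simp [S, δ, abs_pos.2 hy]⟩).ne' hSfin.ne
  refine ⟨μ.real S * (c₀ * δ ^ θ), by positivity, δ⁻¹, fun t ht => ?_⟩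
  have ht0 : 0 < t := (inv_pos.2 hδ).trans_le ht
  have hlower : ∀ x ∈ S, c₀ * δ ^ θ * t ^ θ ≤ F (t * φ x) := fun x hx => by
    have htφ : t * δ ≤ |t * φ x| := by
      rw [abs_mul, abs_of_pos ht0]; exact mul_le_mul_of_nonneg_left (le_of_lt hx) ht0.le
    have h1 : 1 ≤ t * δ := by simpa [mul_comm] using (inv_le_iff_one_le_mul₀ hδ).1 ht
    calc c₀ * δ ^ θ * t ^ θ = c₀ * (t * δ) ^ θ := by rw [mul_rpow ht0.le hδ.le]; ring
      _ ≤ c₀ * |t * φ x| ^ θ := by gcongr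
      _ ≤ F (t * φ x) := hFgrowth _ (h1.trans htφ)
  have hint := integrable_comp_mul (μ := μ) hF hF0 hφ hφc t
  calc μ.real S * (c₀ * δ ^ θ) * t ^ θ = ∫ x in S, c₀ * δ ^ θ * t ^ θ ∂μ := by
        rw [setIntegral_const, smul_eq_mul, mul_assoc]
    _ ≤ ∫ x in S, F (t * φ x) ∂μ :=
        setIntegral_mono_on (integrableOn_const hSfin.ne) hint.integrableOn
          hSopen.measurableSet hlower
    _ ≤ ∫ x, F (t * φ x) ∂μ := setIntegral_le_integral hint (ae_of_all _ fun x => hFnonneg _)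

theorem integral_rpow_le_integral_add_rpow (hg : Continuous g) (hgc : HasCompactSupport g)
    (hg0 : ∀ x, 0 ≤ g x) {p q : ℝ} (hp : 1 ≤ p) (hpq : p ≤ q) :
    ∫ x, g x ^ p ∂μ ≤ ∫ x, (g x + g x ^ q) ∂μ :=
  integral_mono (integrable_rpow_of_hasCompactSupport hg hgc (by linarith))
    ((hg.integrable_of_hasCompactSupport hgc).add
      (integrable_rpow_of_hasCompactSupport hg hgc (by linarith)))
    fun x => rpow_le_self_add_rpow (hg0 x) hp hpq

theorem integral_rpow_pos [μ.IsOpenPosMeasure] (hg : Continuous g) (hgc : HasCompactSupport g)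
    (hg0 : ∀ x, 0 ≤ g x) {x : E} (hx : g x ≠ 0) {p : ℝ} (hp : 0 < p) :
    0 < ∫ x, g x ^ p ∂μ :=
  (hg.rpow_const fun _ => Or.inr hp.le).integral_pos_of_hasCompactSupport_nonneg_nonzero
    (hgc.rpow_const hp.ne') (fun y => rpow_nonneg (hg0 y) p)
    (rpow_pos_of_pos ((hg0 x).lt_of_ne' hx) p).ne'

end Rescaling

theorem norm_gradient_eq_norm_fderiv {F : Type*} [NormedAddCommGroup F] [InnerProductSpace ℝ F]
    [CompleteSpace F] (φ : F → ℝ) (x : F) : ‖gradient φ x‖ = ‖fderiv ℝ φ x‖ := by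
  rw [← toDual_gradient, LinearIsometryEquiv.norm_map]

theorem HasCompactSupport.exists_fderiv_ne_zero {F : Type*} [NormedAddCommGroup F]
    [NormedSpace ℝ F] [Nontrivial F] {φ : F → ℝ} (hφc : HasCompactSupport φ)
    (hφ : Differentiable ℝ φ) (hφ0 : φ ≠ 0) : ∃ x, fderiv ℝ φ x ≠ 0 := by
  by_contra! h
  obtain ⟨z, hz⟩ := ne_univ_iff_exists_notMem _ |>.1 hφc.ne_univ
  exact hφ0 <| funext fun y => by
    rw [is_const_of_fderiv_eq_zero hφ h y z, image_eq_zero_of_notMem_tsupport hz, Pi.zero_apply]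

section Nehari

-- `Φ t` and `Ψ t` stand for `∫ f (t φ) φ` and `∫ F (t φ)`.
variable {Φ Ψ : ℝ → ℝ} {θ c t₀ : ℝ}

theorem le_max_of_rpow_sub_one_mul_eq (hΨΦ : ∀ t, θ * Ψ t ≤ t * Φ t)
    (hlarge : ∀ t, t₀ ≤ t → c * t ^ θ ≤ Ψ t) (hθ : 0 < θ) (hc : 0 < c)
    {p p₁ A Amax t : ℝ} (hpp₁ : p ≤ p₁) (hp₁θ : p₁ < θ) (hA : A ≤ Amax) (ht : 0 < t)
    (heq : t ^ (p - 1) * A = Φ t) :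
    t ≤ max t₀ (max 1 ((Amax / (θ * c)) ^ (θ - p₁)⁻¹)) := by
  by_contra! h
  have ht₀ : t₀ ≤ t := (le_max_left _ _).trans h.le
  have ht1 : 1 ≤ t := ((le_max_left _ _).trans (le_max_right _ _)).trans h.le
  have hpow : t ^ p * (θ * c * t ^ (θ - p)) ≤ t ^ p * Amax :=
    calc t ^ p * (θ * c * t ^ (θ - p)) = θ * (c * t ^ θ) := by
          rw [mul_left_comm, ← rpow_add ht, add_sub_cancel]; ring
      _ ≤ θ * Ψ t := by gcongr; exact hlarge t ht₀
      _ ≤ t * Φ t := hΨΦ t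
      _ = t ^ p * A := by rw [← heq, ← mul_assoc, mul_comm t, ← rpow_add_one ht.ne', sub_add_cancel]
      _ ≤ t ^ p * Amax := by gcongr
  have hθp : θ * c * t ^ (θ - p) ≤ Amax := le_of_mul_le_mul_left hpow (rpow_pos_of_pos ht p)
  have hθp₁ : t ^ (θ - p₁) ≤ Amax / (θ * c) := by
    rw [le_div_iff₀ (by positivity)]
    calc t ^ (θ - p₁) * (θ * c) ≤ t ^ (θ - p) * (θ * c) := by gcongr
      _ ≤ Amax := by linarith
  have htle : t ≤ (Amax / (θ * c)) ^ (θ - p₁)⁻¹ :=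
    (le_rpow_inv_iff_of_pos ht.le ((rpow_nonneg ht.le _).trans hθp₁) (by linarith)).2 hθp₁
  linarith [le_max_right 1 ((Amax / (θ * c)) ^ (θ - p₁)⁻¹),
    le_max_right t₀ (max 1 ((Amax / (θ * c)) ^ (θ - p₁)⁻¹))]

theorem exists_rpow_sub_one_mul_eq (hΦ : Continuous Φ) (hΨΦ : ∀ t, θ * Ψ t ≤ t * Φ t)
    (hlarge : ∀ t, t₀ ≤ t → c * t ^ θ ≤ Ψ t) (hθ : 0 < θ) (hc : 0 < c) {p₀ B δ : ℝ}
    (hδ : 0 < δ) (hsmall : ∀ t ∈ Ioo 0 δ, Φ t ≤ t ^ (p₀ - 1) * B) {p A : ℝ} (hp : 1 < p)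
    (hpp₀ : p < p₀) (hpθ : p < θ) (hA : 0 < A) :
    ∃ t, 0 < t ∧ t ^ (p - 1) * A = Φ t := by
  have hsmall_pow : Tendsto (fun t => t ^ (p₀ - p) * B) (𝓝[>] 0) (𝓝 0) := by
    simpa [zero_rpow (by linarith : p₀ - p ≠ 0)] using
      (((continuous_rpow_const (by linarith : 0 ≤ p₀ - p)).tendsto 0).mono_left
        nhdsWithin_le_nhds).mul_const B
  obtain ⟨a, ⟨ha0, haδ⟩, haA⟩ : ∃ a, a ∈ Ioo 0 δ ∧ a ^ (p₀ - p) * B < A :=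
    ((show ∀ᶠ t in 𝓝[>] 0, t ∈ Ioo 0 δ from Ioo_mem_nhdsGT hδ).and
      (hsmall_pow.eventually (gt_mem_nhds hA))).exists
  obtain ⟨b, hb₀, hb0, hbA⟩ : ∃ b, t₀ ≤ b ∧ 0 < b ∧ A < θ * c * b ^ (θ - p) :=
    ((eventually_ge_atTop t₀).and ((eventually_gt_atTop 0).and
      (((tendsto_rpow_atTop (by linarith)).const_mul_atTop (by positivity)).eventually_gt_atTop
        A))).exists
  have hga : 0 ≤ a ^ (p - 1) * A - Φ a := by
    have : Φ a ≤ a ^ (p - 1) * (a ^ (p₀ - p) * B) :=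
      (hsmall a ⟨ha0, haδ⟩).trans_eq (by rw [← mul_assoc, ← rpow_add ha0]; ring_nf)
    nlinarith [rpow_pos_of_pos ha0 (p - 1)]
  have hgb : b ^ (p - 1) * A - Φ b ≤ 0 := by
    have : b * (b ^ (p - 1) * A) ≤ b * Φ b :=
      calc b * (b ^ (p - 1) * A) ≤ b ^ p * (θ * c * b ^ (θ - p)) := by
            rw [← mul_assoc, mul_comm b, ← rpow_add_one hb0.ne', sub_add_cancel]
            gcongr
        _ = θ * (c * b ^ θ) := by rw [mul_left_comm, ← rpow_add hb0, add_sub_cancel]; ring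
        _ ≤ θ * Ψ b := by gcongr; exact hlarge b hb₀
        _ ≤ b * Φ b := hΨΦ b
    linarith [le_of_mul_le_mul_left this hb0]
  have hg : Continuous fun t => t ^ (p - 1) * A - Φ t :=
    ((continuous_rpow_const (by linarith)).mul continuous_const).sub hΦ
  obtain ⟨t, ht, hroot⟩ := intermediate_value_uIcc hg.continuousOn (mem_uIcc.2 (Or.inr ⟨hgb, hga⟩))
  exact ⟨t, (lt_min ha0 hb0).trans_le ht.1, sub_eq_zero.1 hroot⟩

theorem exists_nehari_root_energy_le (hΦ : Continuous Φ) (hΨ0 : ∀ t, 0 ≤ Ψ t)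
    (hΨΦ : ∀ t, θ * Ψ t ≤ t * Φ t) (hlarge : ∀ t, t₀ ≤ t → c * t ^ θ ≤ Ψ t) (hθ : 0 < θ)
    (hc : 0 < c) {p₀ B δ : ℝ} (hδ : 0 < δ) (hsmall : ∀ t ∈ Ioo 0 δ, Φ t ≤ t ^ (p₀ - 1) * B)
    {A : ℝ → ℝ} {p₁ Amax : ℝ} (hp₁ : 1 < p₁) (hp₁p₀ : p₁ < p₀) (hp₁θ : p₁ < θ)
    (hA : ∀ p, 1 < p → p ≤ p₁ → 0 < A p ∧ A p ≤ Amax) :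
    ∃ M, 0 < M ∧ ∀ p, 1 < p → p ≤ p₁ →
      ∃ t, 0 < t ∧ t ^ (p - 1) * A p = Φ t ∧ t ^ p / p * A p - Ψ t ≤ M := by
  set T := max t₀ (max 1 ((Amax / (θ * c)) ^ (θ - p₁)⁻¹))
  have hT : 1 ≤ T := (le_max_left _ _).trans (le_max_right _ _)
  have hAmax : 0 < Amax := (hA p₁ hp₁ le_rfl).1.trans_le (hA p₁ hp₁ le_rfl).2
  refine ⟨T ^ p₁ * Amax + 1, by positivity, fun p hp hpp₁ => ?_⟩
  obtain ⟨hA0, hAle⟩ := hA p hp hpp₁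
  obtain ⟨t, ht, heq⟩ := exists_rpow_sub_one_mul_eq hΦ hΨΦ hlarge hθ hc hδ hsmall hp
    (by linarith) (by linarith) hA0
  have htT : t ≤ T := le_max_of_rpow_sub_one_mul_eq hΨΦ hlarge hθ hc hpp₁ hp₁θ hAle ht heq
  have htp : t ^ p ≤ T ^ p₁ :=
    (rpow_le_rpow ht.le htT (by linarith)).trans (rpow_le_rpow_of_exponent_le hT hpp₁)
  refine ⟨t, ht, heq, ?_⟩
  calc t ^ p / p * A p - Ψ t ≤ t ^ p * A p := by
        have := div_le_self (rpow_nonneg ht.le p) hp.le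
        nlinarith [hΨ0 t]
    _ ≤ T ^ p₁ * Amax := by gcongr
    _ ≤ T ^ p₁ * Amax + 1 := by linarith

end Nehari

theorem exists_nehari_rescaling_energy_le {E : Type*} [TopologicalSpace E] [MeasurableSpace E]
    [OpensMeasurableSpace E] [WeaklyLocallyCompactSpace E] {μ : Measure E}
    [IsFiniteMeasureOnCompacts μ] [μ.IsOpenPosMeasure] {φ : E → ℝ} (hφ : Continuous φ)
    (hφc : HasCompactSupport φ) (hφ0 : φ ≠ 0) {f F : ℝ → ℝ} {p₀ θ : ℝ} (hf : Continuous f)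
    (hp₀ : 1 < p₀) (hf1 : Tendsto (fun t => f t / |t| ^ (p₀ - 1)) (𝓝[≠] 0) (𝓝 0)) (hθ : 0 < θ)
    (hF : ∀ t, HasDerivAt F (f t) t) (hF0 : F 0 = 0)
    (hf2 : ∀ t, t ≠ 0 → 0 < θ * F t ∧ θ * F t ≤ f t * t)
    {A : ℝ → ℝ} {p₁ Amax : ℝ} (hp₁ : 1 < p₁) (hp₁p₀ : p₁ < p₀) (hp₁θ : p₁ < θ)
    (hA : ∀ p, 1 < p → p ≤ p₁ → 0 < A p ∧ A p ≤ Amax) :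
    ∃ M, 0 < M ∧ ∀ p, 1 < p → p ≤ p₁ → ∃ t, 0 < t ∧
      t ^ (p - 1) * A p = ∫ x, f (t * φ x) * φ x ∂μ ∧
      t ^ p / p * A p - ∫ x, F (t * φ x) ∂μ ≤ M := by
  have hFc : Continuous F := continuous_iff_continuousAt.2 fun t => (hF t).continuousAt
  have hFpos : ∀ s, s ≠ 0 → 0 < F s := fun s hs => pos_of_mul_pos_right (hf2 s hs).1 hθ.le
  have hFnonneg : ∀ s, 0 ≤ F s := fun s => by
    rcases eq_or_ne s 0 with rfl | hs
    · exact hF0.ge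
    · exact (hFpos s hs).le
  have hθF : ∀ s, θ * F s ≤ f s * s := fun s => by
    rcases eq_or_ne s 0 with rfl | hs
    · simp [hF0]
    · exact (hf2 s hs).2
  obtain ⟨δ, hδ, hsmall⟩ := exists_integral_comp_mul_mul_le_rpow (μ := μ) hp₀ hf
    (exists_abs_mul_le_rpow_of_tendsto hp₀ hf1) hφ hφc
  obtain ⟨c, hc, t₀, hlarge⟩ := exists_mul_rpow_le_integral_comp_mul (μ := μ) hθ.le
    (lt_min (hFpos 1 one_ne_zero) (hFpos (-1) (by norm_num))) hFc hF0 hFnonneg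
    (fun s hs => min_mul_abs_rpow_le hF hθF hs) hφ hφc hφ0
  exact exists_nehari_root_energy_le (continuous_integral_comp_mul_mul hf hφ hφc)
    (fun t => integral_nonneg fun x => hFnonneg _) (mul_integral_comp_mul_le hFc hF0 hf hθF hφ hφc)
    hlarge hθ hc hδ hsmall hp₁ hp₁p₀ hp₁θ hA

theorem nehari_energy_bounded_general (N : ℕ) (hN : 1 ≤ N)
    (φ : EuclideanSpace ℝ (Fin N) → ℝ)
    (hφ : ContDiff ℝ 1 φ) (hφc : HasCompactSupport φ) (hφ0 : φ ≠ 0)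
    (f : ℝ → ℝ) (hf : Continuous f)
    (p₀ : ℝ) (hp₀1 : 1 < p₀)
    (hf1 : Tendsto (fun t : ℝ => f t / |t| ^ (p₀ - 1)) (nhdsWithin 0 {0}ᶜ) (nhds 0))
    (θ : ℝ) (hθ : 1 < θ)
    (hf2 : ∀ t : ℝ, t ≠ 0 →
      0 < θ * (∫ s in (0:ℝ)..t, f s) ∧ θ * (∫ s in (0:ℝ)..t, f s) ≤ f t * t) :
    ∃ p₁ M : ℝ, 1 < p₁ ∧ p₁ < min p₀ θ ∧ 0 < M ∧
      ∀ p : ℝ, 1 < p → p ≤ p₁ →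
        ∃ t : ℝ, 0 < t ∧
          t ^ (p - 1) * (∫ x, ‖gradient φ x‖ ^ p) = (∫ x, f (t * φ x) * φ x) ∧
          t ^ p / p * (∫ x, ‖gradient φ x‖ ^ p)
            - (∫ x, (∫ s in (0:ℝ)..(t * φ x), f s)) ≤ M := by
  have : Nonempty (Fin N) := ⟨⟨0, hN⟩⟩
  have hg : Continuous fun x => ‖fderiv ℝ φ x‖ := (hφ.continuous_fderiv one_ne_zero).norm
  have hgc : HasCompactSupport fun x => ‖fderiv ℝ φ x‖ := (hφc.fderiv (𝕜 := ℝ)).norm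
  obtain ⟨x₁, hx₁⟩ := hφc.exists_fderiv_ne_zero (hφ.differentiable one_ne_zero) hφ0
  obtain ⟨p₁, hp₁, hp₁min⟩ := exists_between (lt_min hp₀1 hθ)
  simp_rw [norm_gradient_eq_norm_fderiv]
  obtain ⟨M, hM, hbound⟩ := exists_nehari_rescaling_energy_le
    (μ := volume) (A := fun p => ∫ x, ‖fderiv ℝ φ x‖ ^ p) hφ.continuous hφc hφ0 hf hp₀1 hf1
    (by linarith) (fun t => (hf.integral_hasStrictDerivAt 0 t).hasDerivAt)
    intervalIntegral.integral_same hf2 hp₁ (hp₁min.trans_le (min_le_left _ _))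
    (hp₁min.trans_le (min_le_right _ _)) fun p hp hpp₁ =>
      ⟨integral_rpow_pos hg hgc (fun _ => norm_nonneg _) (norm_ne_zero_iff.2 hx₁) (by linarith),
        integral_rpow_le_integral_add_rpow hg hgc (fun _ => norm_nonneg _) hp.le hpp₁⟩
  exact ⟨p₁, M, hp₁, hp₁min, hM, hbound⟩

/-- There are `p₁ ∈ (1, min p₀ θ)` and `M > 0` such that for every `p ∈ (1, p₁]` the
Nehari rescaling of `φ` exists and its `p`-energy is bounded by `M`. -/
theorem nehari_energy_bounded (N : ℕ) (hN : 1 ≤ N)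
    (φ : EuclideanSpace ℝ (Fin N) → ℝ)
    (hφ : ContDiff ℝ 1 φ) (hφc : HasCompactSupport φ) (hφ0 : φ ≠ 0)
    (f : ℝ → ℝ) (hf : Continuous f)
    (p₀ : ℝ) (hp₀1 : 1 < p₀) (hp₀2 : p₀ < 2)
    (hf1 : Tendsto (fun t : ℝ => f t / |t| ^ (p₀ - 1)) (nhdsWithin 0 {0}ᶜ) (nhds 0))
    (θ : ℝ) (hθ : 1 < θ)
    (hf2 : ∀ t : ℝ, t ≠ 0 →
      0 < θ * (∫ s in (0:ℝ)..t, f s) ∧ θ * (∫ s in (0:ℝ)..t, f s) ≤ f t * t) :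
    ∃ p₁ M : ℝ, 1 < p₁ ∧ p₁ < min p₀ θ ∧ 0 < M ∧
      ∀ p : ℝ, 1 < p → p ≤ p₁ →
        ∃ t : ℝ, 0 < t ∧
          t ^ (p - 1) * (∫ x, ‖gradient φ x‖ ^ p) = (∫ x, f (t * φ x) * φ x) ∧
          t ^ p / p * (∫ x, ‖gradient φ x‖ ^ p)
            - (∫ x, (∫ s in (0:ℝ)..(t * φ x), f s)) ≤ M :=
  nehari_energy_bounded_general N hN φ hφ hφc hφ0 f hf p₀ hp₀1 hf1 θ hθ hf2
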